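/- Let s, t be real numbers with −1 < s < t < 1. Then the point (s,s²,s³) + 2·(t,t²,t³) + (1,1,1) does not lie on the topological boundary of 𝒜_{3,4}. -/

import Mathlib

/-!
The point is `γ s + 2 • γ t + γ 1` with `γ u = (u, u², u³)`: its coordinates are the first three
power sums of the roots of `(x - s)(x - t)²(x - 1)`. Adding a small `ε > 0` to this quartic
changes only its constant term, hence not the first three power sums of its roots (Newton's
identities), while it splits the double root `t` and leaves four distinct roots in `(s, 1)`. So the
point is also `∑ γ rᵢ` with distinct `rᵢ ∈ (-1, 1)`. At such an `r` the differential of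
`r ↦ ∑ γ rᵢ` is onto, since a linear form killing every `γ' rᵢ` is a quadratic polynomial with
at least three roots. By the inverse function theorem, the image of the open cube `(-1, 1)⁴`
is then a neighbourhood of the point, which therefore lies in the interior of `𝒜_{3,4}`.
-/

open Set Filter Topology Polynomial Function

/-- The Minkowski sum of `n` copies of the twisted cubic segment
`{(t, t^2, t^3) : -1 <= t <= 1}`. -/
def A3 (n : ℕ) : Set (ℝ × ℝ × ℝ) :=
  {p | ∃ t : Fin n → ℝ, (∀ i, -1 ≤ t i ∧ t i ≤ 1) ∧
       p = (∑ i, t i, ∑ i, (t i) ^ 2, ∑ i, (t i) ^ 3)}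

def momentCurve (u : ℝ) : ℝ × ℝ × ℝ := (u, u ^ 2, u ^ 3)

def momentCurveDeriv (u : ℝ) : ℝ × ℝ × ℝ := (1, 2 * u, 3 * u ^ 2)

theorem hasStrictDerivAt_momentCurve (u : ℝ) :
    HasStrictDerivAt momentCurve (momentCurveDeriv u) u := by
  have h₂ := hasStrictDerivAt_pow 2 u
  have h₃ := hasStrictDerivAt_pow 3 u
  norm_num at h₂ h₃
  exact (hasStrictDerivAt_id u).prodMk (h₂.prodMk h₃)

theorem sum_momentCurve {n : ℕ} (t : Fin n → ℝ) :
    ∑ i, momentCurve (t i) = (∑ i, t i, ∑ i, t i ^ 2, ∑ i, t i ^ 3) := by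
  simp only [momentCurve, Prod.ext_iff, Prod.fst_sum, Prod.snd_sum, and_self]

theorem sum_momentCurve_mem_A3 {n : ℕ} {t : Fin n → ℝ} (ht : ∀ i, t i ∈ Icc (-1) 1) :
    ∑ i, momentCurve (t i) ∈ A3 n :=
  ⟨t, ht, sum_momentCurve t⟩

def fderivSumMomentCurve {n : ℕ} (t : Fin n → ℝ) : (Fin n → ℝ) →L[ℝ] ℝ × ℝ × ℝ :=
  ∑ i, (ContinuousLinearMap.proj (R := ℝ) (φ := fun _ : Fin n => ℝ) i).smulRight
    (momentCurveDeriv (t i))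

theorem hasStrictFDerivAt_sum_momentCurve {n : ℕ} (t : Fin n → ℝ) :
    HasStrictFDerivAt (fun t : Fin n → ℝ => ∑ i, momentCurve (t i))
      (fderivSumMomentCurve t) t := by
  refine HasStrictFDerivAt.fun_sum fun i _ => ?_
  convert (hasStrictDerivAt_momentCurve (t i)).hasStrictFDerivAt.comp t
    (hasStrictFDerivAt_apply (𝕜 := ℝ) i t) using 1
  ext v <;> simp

theorem range_fderivSumMomentCurve {n : ℕ} {t : Fin n → ℝ} (ht : Injective t) (hn : 3 ≤ n) :
    (fderivSumMomentCurve t).range = ⊤ := by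
  by_contra hne
  obtain ⟨f, hf, hle⟩ := Submodule.exists_le_ker_of_lt_top _ (lt_top_iff_ne_top.2 hne)
  have hvanish : ∀ i, f (momentCurveDeriv (t i)) = 0 := fun i =>
    hle ⟨Pi.single i 1, by simp [fderivSumMomentCurve, Pi.single_apply]⟩
  have hf_apply : ∀ p : ℝ × ℝ × ℝ,
      f p = f (1, 0, 0) * p.1 + f (0, 1, 0) * p.2.1 + f (0, 0, 1) * p.2.2 := by
    rintro ⟨x, y, z⟩
    have hp : ((x, y, z) : ℝ × ℝ × ℝ) = x • (1, 0, 0) + y • (0, 1, 0) + z • (0, 0, 1) := by simp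
    nth_rewrite 1 [hp]
    simp only [map_add, map_smul, smul_eq_mul]
    ring
  let P : Cubic ℝ := ⟨0, 3 * f (0, 0, 1), 2 * f (0, 1, 0), f (1, 0, 0)⟩
  have hP : P = 0 := by
    refine (Cubic.toPoly_eq_zero_iff P).1 <|
      eq_zero_of_natDegree_lt_card_of_eval_eq_zero _ ht (fun i => ?_) ?_
    · rw [← hvanish i, hf_apply]
      simp only [P, Cubic.toPoly, eval_add, eval_mul, eval_C, eval_pow, eval_X, momentCurveDeriv]
      ring
    · rw [Fintype.card_fin]
      exact Cubic.natDegree_of_a_eq_zero'.trans_lt hn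
  have h₀ : f (1, 0, 0) = 0 := congrArg Cubic.d hP
  have h₁ : f (0, 1, 0) = 0 := (mul_eq_zero.1 (congrArg Cubic.c hP)).resolve_left two_ne_zero
  have h₂ : f (0, 0, 1) = 0 := (mul_eq_zero.1 (congrArg Cubic.b hP)).resolve_left three_ne_zero
  exact hf (LinearMap.ext fun p => by simp [hf_apply p, h₀, h₁, h₂])

theorem sum_momentCurve_mem_interior_A3 {n : ℕ} {t : Fin n → ℝ} (ht : Injective t) (hn : 3 ≤ n)
    (hmem : ∀ i, t i ∈ Ioo (-1) 1) : ∑ i, momentCurve (t i) ∈ interior (A3 n) := by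
  rw [mem_interior_iff_mem_nhds, ← ((hasStrictFDerivAt_sum_momentCurve t).map_nhds_eq_of_surj
    (range_fderivSumMomentCurve ht hn)), mem_map]
  filter_upwards [set_pi_mem_nhds finite_univ fun i _ => isOpen_Ioo.mem_nhds (hmem i)]
    with t' ht'
  exact sum_momentCurve_mem_A3 fun i => Ioo_subset_Icc_self (ht' i (mem_univ i))

theorem exists_strictMono_zeros_of_sign_changes {f : ℝ → ℝ} (hf : Continuous f) {n : ℕ}
    {x : Fin (n + 1) → ℝ} (hx : Monotone x)
    (hsign : ∀ k : Fin n, f (x k.castSucc) * f (x k.succ) < 0) :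
    ∃ r : Fin n → ℝ, StrictMono r ∧ (∀ k, r k ∈ Ioo (x k.castSucc) (x k.succ)) ∧
      ∀ k, f (r k) = 0 := by
  have hzero : ∀ k : Fin n, ∃ r ∈ Ioo (x k.castSucc) (x k.succ), f r = 0 := by
    intro k
    have hle := hx k.castSucc_le_succ
    rcases mul_neg_iff.1 (hsign k) with ⟨hpos, hneg⟩ | ⟨hneg, hpos⟩
    · exact intermediate_value_Ioo' hle hf.continuousOn ⟨hneg, hpos⟩
    · exact intermediate_value_Ioo hle hf.continuousOn ⟨hneg, hpos⟩
  choose r hr hfr using hzero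
  refine ⟨r, fun k l hkl => ?_, hr, hfr⟩
  calc r k < x k.succ := (hr k).2
    _ ≤ x l.castSucc := hx (Fin.succ_le_castSucc_iff.2 hkl)
    _ < r l := (hr l).1

theorem powerSums_eq_of_roots_add_const {a b c d ε : ℝ} {r : Fin 4 → ℝ} (hr : Injective r)
    (hroot : ∀ i, (r i - a) * (r i - b) * (r i - c) * (r i - d) + ε = 0) :
    ∑ i, r i = a + b + c + d ∧ ∑ i, r i ^ 2 = a ^ 2 + b ^ 2 + c ^ 2 + d ^ 2 ∧
      ∑ i, r i ^ 3 = a ^ 3 + b ^ 3 + c ^ 3 + d ^ 3 := by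
  rw [Fin.sum_univ_four, Fin.sum_univ_four, Fin.sum_univ_four]
  set e₁ := r 0 + r 1 + r 2 + r 3
  set e₂ := r 0 * r 1 + r 0 * r 2 + r 0 * r 3 + r 1 * r 2 + r 1 * r 3 + r 2 * r 3
  set e₃ := r 0 * r 1 * r 2 + r 0 * r 1 * r 3 + r 0 * r 2 * r 3 + r 1 * r 2 * r 3
  set f₁ := a + b + c + d
  set f₂ := a * b + a * c + a * d + b * c + b * d + c * d
  set f₃ := a * b * c + a * b * d + a * c * d + b * c * d
  -- `P` is `(x - a)(x - b)(x - c)(x - d) + ε - ∏ j, (x - r j)`, a cubic vanishing at every `r i`.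
  let P : Cubic ℝ := ⟨e₁ - f₁, f₂ - e₂, e₃ - f₃, a * b * c * d + ε - r 0 * r 1 * r 2 * r 3⟩
  have hP : P = 0 := by
    refine (Cubic.toPoly_eq_zero_iff P).1 <|
      eq_zero_of_natDegree_lt_card_of_eval_eq_zero _ hr (fun i => ?_) ?_
    · have hprod : ∏ j, (r i - r j) = 0 := Finset.prod_eq_zero (Finset.mem_univ i) (sub_self _)
      rw [Fin.prod_univ_four] at hprod
      simp only [P, Cubic.toPoly, eval_add, eval_mul, eval_C, eval_pow, eval_X]
      linear_combination hroot i - hprod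
    · rw [Fintype.card_fin]
      exact natDegree_cubic_le.trans_lt (by norm_num)
  have h₁ : e₁ = f₁ := sub_eq_zero.1 (congrArg Cubic.a hP)
  have h₂ : f₂ = e₂ := sub_eq_zero.1 (congrArg Cubic.b hP)
  have h₃ : e₃ = f₃ := sub_eq_zero.1 (congrArg Cubic.c hP)
  refine ⟨h₁, ?_, ?_⟩
  · linear_combination (e₁ + f₁) * h₁ + 2 * h₂
  · linear_combination (e₁ ^ 2 + e₁ * f₁ + f₁ ^ 2 - 3 * e₂) * h₁ + 3 * f₁ * h₂ + 3 * h₃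

theorem exists_strictMono_roots_of_perturbation {s t : ℝ} (hst : s < t) (ht : t < 1) :
    ∃ ε : ℝ, ∃ r : Fin 4 → ℝ, StrictMono r ∧ (∀ i, r i ∈ Ioo s 1) ∧
      ∀ i, (r i - s) * (r i - t) * (r i - t) * (r i - 1) + ε = 0 := by
  set q : ℝ → ℝ := fun x => (x - s) * (x - t) * (x - t) * (x - 1) with hq
  have hq_neg : ∀ y, s < y → y < 1 → y ≠ t → q y < 0 := fun y hsy hy1 hyt => by
    have hpos : 0 < (y - s) * ((y - t) * (y - t)) :=
      mul_pos (sub_pos.2 hsy) (mul_self_pos.2 (sub_ne_zero.2 hyt))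
    simpa only [hq, mul_assoc] using mul_neg_of_pos_of_neg hpos (sub_neg.2 hy1)
  have hq₁ := hq_neg ((s + t) / 2) (by linarith) (by linarith) (by linarith)
  have hq₂ := hq_neg ((t + 1) / 2) (by linarith) (by linarith) (by linarith)
  obtain ⟨ε, hε, hm₁, hm₂⟩ :
      ∃ ε > 0, q ((s + t) / 2) + ε < 0 ∧ q ((t + 1) / 2) + ε < 0 := by
    have hmax := max_lt hq₁ hq₂
    refine ⟨-max (q ((s + t) / 2)) (q ((t + 1) / 2)) / 2, by linarith, ?_, ?_⟩
    · linarith [le_max_left (q ((s + t) / 2)) (q ((t + 1) / 2))]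
    · linarith [le_max_right (q ((s + t) / 2)) (q ((t + 1) / 2))]
  set x : Fin 5 → ℝ := ![s, (s + t) / 2, t, (t + 1) / 2, 1]
  have hx : Monotone x := Fin.monotone_iff_le_succ.2 fun k => by
    fin_cases k <;> simp [x] <;> linarith
  have hsign : ∀ k : Fin 4, (q (x k.castSucc) + ε) * (q (x k.succ) + ε) < 0 := by
    have hq_s : q s = 0 := by simp [hq]
    have hq_t : q t = 0 := by simp [hq]
    have hq_one : q 1 = 0 := by simp [hq]
    intro k
    fin_cases k <;> simp [x, hq_s, hq_t, hq_one] <;> nlinarith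
  have hcont : Continuous fun y => q y + ε := by simp only [hq]; fun_prop
  obtain ⟨r, hr, hmem, hroot⟩ := exists_strictMono_zeros_of_sign_changes hcont hx hsign
  exact ⟨ε, r, hr, fun k => ⟨(hx (Fin.zero_le _)).trans_lt (hmem k).1,
    (hmem k).2.trans_le (hx (Fin.le_last _))⟩, hroot⟩

theorem one_two_one_not_boundary (s t : ℝ) (hs : -1 < s) (hst : s < t) (ht : t < 1) :
    (s + 2 * t + 1, s ^ 2 + 2 * t ^ 2 + 1, s ^ 3 + 2 * t ^ 3 + 1) ∉ frontier (A3 4) := by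
  obtain ⟨_, r, hr, hmem, hroot⟩ := exists_strictMono_roots_of_perturbation hst ht
  obtain ⟨h₁, h₂, h₃⟩ := powerSums_eq_of_roots_add_const hr.injective hroot
  have hint := sum_momentCurve_mem_interior_A3 hr.injective (by norm_num)
    fun i => ⟨hs.trans (hmem i).1, (hmem i).2⟩
  rw [sum_momentCurve, h₁, h₂, h₃] at hint
  refine fun hfront => hfront.2 ?_
  convert hint using 3 <;> ring
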